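/- arXiv:2012.03582 — 3 statements merged into one kernel-verified Lean document; each statement's English description precedes it below -/
import Mathlib

section
/- If (u, v) is a matched edge, then evenlevel(v) = oddlevel(u) + 1 and evenlevel(u) = oddlevel(v) + 1. -/
open scoped Classical

universe u

variable {V : Type u}

/-- A finite-or-infinite undirected graph together with a matching. -/
structure MatchedGraph (V : Type u) where
  adj : V → V → Prop
  symm : ∀ u v, adj u v → adj v u
  loopless : ∀ v, ¬ adj v v
  M : V → V → Prop
  M_symm : ∀ u v, M u v → M v u
  M_sub : ∀ u v, M u v → adj u v
  M_matching : ∀ u v w, M u v → M u w → v = w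

namespace MatchedGraph

/-- A vertex is unmatched if no matched edge is incident to it. -/
def unmatched (g : MatchedGraph V) (v : V) : Prop := ∀ u, ¬ g.M v u

/-- `p` is a simple alternating path starting at `b` and ending at `v`,
whose first edge is unmatched and whose edges alternate unmatched/matched.
(The `i`-th edge is matched iff `i` is odd.) -/
def AltPath (g : MatchedGraph V) (p : List V) (b v : V) : Prop :=
  p.head? = some b ∧ p.getLast? = some v ∧ p.Nodup ∧
  ∀ i, i + 1 < p.length →
    g.adj (p.getD i b) (p.getD (i + 1) b) ∧
      (g.M (p.getD i b) (p.getD (i + 1) b) ↔ i % 2 = 1)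

/-- An alternating path from an *unmatched* vertex `f` to `v`. -/
def AltPathFrom (g : MatchedGraph V) (p : List V) (f v : V) : Prop :=
  g.unmatched f ∧ g.AltPath p f v

/-- Minimum length of an even alternating path from an unmatched vertex to `v`. -/
noncomputable def evenlevel (g : MatchedGraph V) (v : V) : ℕ∞ :=
  sInf {n : ℕ∞ | ∃ p f, g.AltPathFrom p f v ∧ Even (p.length - 1) ∧
    n = ((p.length - 1 : ℕ) : ℕ∞)}

/-- Minimum length of an odd alternating path from an unmatched vertex to `v`. -/
noncomputable def oddlevel (g : MatchedGraph V) (v : V) : ℕ∞ :=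
  sInf {n : ℕ∞ | ∃ p f, g.AltPathFrom p f v ∧ Odd (p.length - 1) ∧
    n = ((p.length - 1 : ℕ) : ℕ∞)}

noncomputable def tenacity (g : MatchedGraph V) (v : V) : ℕ∞ :=
  g.evenlevel v + g.oddlevel v

noncomputable def minlevel (g : MatchedGraph V) (v : V) : ℕ∞ :=
  min (g.evenlevel v) (g.oddlevel v)

noncomputable def maxlevel (g : MatchedGraph V) (v : V) : ℕ∞ :=
  max (g.evenlevel v) (g.oddlevel v)

/-- Minimum length of an augmenting path: an alternating path between two
distinct unmatched vertices. -/
noncomputable def lm (g : MatchedGraph V) : ℕ∞ :=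
  sInf {n : ℕ∞ | ∃ p f v, g.AltPathFrom p f v ∧ g.unmatched v ∧ f ≠ v ∧
    n = ((p.length - 1 : ℕ) : ℕ∞)}

/-- Minimum tenacity of any vertex. -/
noncomputable def tm (g : MatchedGraph V) : ℕ∞ := ⨅ v, g.tenacity v

/-- `p` is an `evenlevel(v)` path starting at the unmatched vertex `f`. -/
def IsEvenlevelPath (g : MatchedGraph V) (p : List V) (f v : V) : Prop :=
  g.AltPathFrom p f v ∧ Even (p.length - 1) ∧
    ((p.length - 1 : ℕ) : ℕ∞) = g.evenlevel v

/-- `p` is an `oddlevel(v)` path starting at the unmatched vertex `f`. -/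
def IsOddlevelPath (g : MatchedGraph V) (p : List V) (f v : V) : Prop :=
  g.AltPathFrom p f v ∧ Odd (p.length - 1) ∧
    ((p.length - 1 : ℕ) : ℕ∞) = g.oddlevel v

/-- `p` is a `minlevel(v)` path starting at the unmatched vertex `f`. -/
def IsMinlevelPath (g : MatchedGraph V) (p : List V) (f v : V) : Prop :=
  g.AltPathFrom p f v ∧ ((p.length - 1 : ℕ) : ℕ∞) = g.minlevel v

/-- `p` is a `maxlevel(v)` path starting at the unmatched vertex `f`. -/
def IsMaxlevelPath (g : MatchedGraph V) (p : List V) (f v : V) : Prop :=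
  g.AltPathFrom p f v ∧ ((p.length - 1 : ℕ) : ℕ∞) = g.maxlevel v

/-- The vertex at position `i` of `p` (whose prefix from `f` has length `i`)
is BFS-honest w.r.t. `p`. -/
def BFSHonest (g : MatchedGraph V) (p : List V) (f : V) (i : ℕ) : Prop :=
  (Even i → g.evenlevel (p.getD i f) = (i : ℕ∞)) ∧
  (Odd i → g.oddlevel (p.getD i f) = (i : ℕ∞))

/-- `u` is a predecessor of `v`: `(u, v)` is the last edge of some
`minlevel(v)` path. -/
def IsPred (g : MatchedGraph V) (u v : V) : Prop :=
  ∃ p f, g.IsMinlevelPath p f v ∧ 2 ≤ p.length ∧ p.getD (p.length - 2) f = u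

/-- A prop is an edge which is the last edge of a minlevel path to one of its
endpoints. -/
def IsPropEdge (g : MatchedGraph V) (u v : V) : Prop :=
  g.IsPred u v ∨ g.IsPred v u

/-- A bridge is an edge that is not a prop. -/
def IsBridge (g : MatchedGraph V) (u v : V) : Prop :=
  g.adj u v ∧ ¬ g.IsPropEdge u v

/-- Tenacity of an edge. -/
noncomputable def etenacity (g : MatchedGraph V) (u v : V) : ℕ∞ :=
  if g.M u v then g.oddlevel u + g.oddlevel v + 1
  else g.evenlevel u + g.evenlevel v + 1

/-- The set `B(v)` of all `F(p, v)`: for each `evenlevel(v)` or `oddlevel(v)`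
path `p`, the vertex on `p` farthest from the unmatched endpoint among the
vertices of tenacity greater than `tenacity(v)`. -/
def Bset (g : MatchedGraph V) (v : V) : Set V :=
  {b | ∃ p f i, (g.IsEvenlevelPath p f v ∨ g.IsOddlevelPath p f v) ∧
    i < p.length ∧ b = p.getD i f ∧ g.tenacity v < g.tenacity b ∧
    ∀ k, i < k → k < p.length → g.tenacity (p.getD k f) ≤ g.tenacity v}

/-- `b` is the (unique) base of `v`. -/
def baseOf (g : MatchedGraph V) (v b : V) : Prop := g.Bset v = {b}

/-- Iterated bases: `iterBase k v b` means `b = base^k(v)` (with `base^0(v) = v`). -/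
def iterBase (g : MatchedGraph V) : ℕ → V → V → Prop
  | 0, v, b => v = b
  | k + 1, v, b => ∃ u, g.iterBase k v u ∧ g.baseOf u b

/-- A vertex is outer if `evenlevel(v) < oddlevel(v)`. -/
def IsOuter (g : MatchedGraph V) (v : V) : Prop := g.evenlevel v < g.oddlevel v

/-- A vertex is inner if it is not outer. -/
def IsInner (g : MatchedGraph V) (v : V) : Prop := g.oddlevel v ≤ g.evenlevel v

/-- The set `S_{b,t}` of vertices of tenacity `t` with base `b`. -/
def Sset (g : MatchedGraph V) (t : ℕ) (b : V) : Set V :=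
  {v | g.tenacity v = (t : ℕ∞) ∧ g.baseOf v b}

/-- The blossom `B_{b,t}`, defined recursively. -/
def blossom (g : MatchedGraph V) : ℕ → V → Set V
  | 0, _ => ∅
  | 1, _ => ∅
  | t + 2, b => g.Sset (t + 2) b ∪
      ⋃ v ∈ {v | (v ∈ g.Sset (t + 2) b ∨ v = b) ∧ g.IsOuter v}, blossom g t v

/-- The nesting depth `N(B_{b,t})` of a blossom. -/
noncomputable def ndepth (g : MatchedGraph V) [Fintype V] : ℕ → V → ℕ
  | 0, _ => 0
  | 1, _ => 0
  | t + 2, b =>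
    if (g.Sset (t + 2) b).Nonempty then
      1 + Finset.univ.sup (fun v =>
        if (v ∈ g.Sset (t + 2) b ∨ v = b) ∧ g.IsOuter v then ndepth g t v else 0)
    else ndepth g t b

/-- `evenlevel(b; v)`: minimum even length of an alternating path from `b` to
`v` starting with an unmatched edge. -/
noncomputable def evenlevelFrom (g : MatchedGraph V) (b v : V) : ℕ∞ :=
  sInf {n : ℕ∞ | ∃ p, g.AltPath p b v ∧ Even (p.length - 1) ∧
    n = ((p.length - 1 : ℕ) : ℕ∞)}

/-- `oddlevel(b; v)`: minimum odd length of an alternating path from `b` to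
`v` starting with an unmatched edge. -/
noncomputable def oddlevelFrom (g : MatchedGraph V) (b v : V) : ℕ∞ :=
  sInf {n : ℕ∞ | ∃ p, g.AltPath p b v ∧ Odd (p.length - 1) ∧
    n = ((p.length - 1 : ℕ) : ℕ∞)}

end MatchedGraph


/-!
Appending the matched edge `(u, v)` to an odd alternating path to `u` gives an even alternating
path to `v`: the path cannot already pass through `v`, because each of its vertices other than
the unmatched start and the end `u` is covered by a matched edge of the path, whose other end
would then be the partner `u` of `v`. Conversely, the last edge of an even alternating path to `v`
is matched, hence is `(v, u)`, and deleting `v` leaves an odd alternating path to `u`.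
-/

namespace MatchedGraph

variable {g : MatchedGraph V} {p : List V} {b f u v x : V}

theorem ne_of_M (h : g.M u v) : u ≠ v := by
  rintro rfl
  exact g.loopless u (g.M_sub u u h)

namespace AltPath

theorem length_pos (hp : g.AltPath p b x) : 0 < p.length := by
  rcases p with _ | ⟨a, p⟩
  · simp [AltPath] at hp
  · simp

theorem getElem_zero (hp : g.AltPath p b x) : p[0]'hp.length_pos = b := by
  simpa [List.head?_eq_getElem?, List.getElem?_eq_getElem hp.length_pos] using hp.1

theorem getElem_length_sub_one (hp : g.AltPath p b x) :
    p[p.length - 1]'(Nat.sub_one_lt_of_lt hp.length_pos) = x := by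
  have := hp.2.1
  rwa [List.getLast?_eq_getElem?, List.getElem?_eq_getElem, Option.some_inj] at this

theorem edge (hp : g.AltPath p b x) (i : ℕ) (hi : i + 1 < p.length) :
    g.adj p[i] p[i + 1] ∧ (g.M p[i] p[i + 1] ↔ i % 2 = 1) := by
  simpa only [List.getD_eq_getElem _ _ hi, List.getD_eq_getElem _ _ (Nat.lt_of_succ_lt hi)]
    using hp.2.2.2 i hi

theorem concat (hp : g.AltPath p b u) (hadj : g.adj u v)
    (hM : g.M u v ↔ (p.length - 1) % 2 = 1) (hv : v ∉ p) :
    g.AltPath (p ++ [v]) b v := by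
  refine ⟨?_, List.getLast?_concat, ?_, fun i hi => ?_⟩
  · simp [List.head?_append, hp.1]
  · simpa [List.nodup_append, hp.2.2.1] using fun a ha (hav : a = v) => hv (hav ▸ ha)
  · simp only [List.length_append, List.length_singleton] at hi
    rw [List.getD_append _ _ _ _ (by omega)]
    rcases Nat.lt_or_ge (i + 1) p.length with hi' | hi'
    · rw [List.getD_append _ _ _ _ hi']
      exact hp.2.2.2 i hi'
    · obtain rfl : i = p.length - 1 := by omega
      rw [List.getD_append_right _ _ _ _ (by omega), Nat.sub_add_cancel hp.length_pos,
        Nat.sub_self, List.getD_cons_zero, List.getD_eq_getElem _ _ (by omega),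
        hp.getElem_length_sub_one]
      exact ⟨hadj, hM⟩

theorem dropLast (hp : g.AltPath p b x) (hlen : 2 ≤ p.length) :
    g.AltPath p.dropLast b p[p.length - 2] := by
  refine ⟨?_, ?_, hp.2.2.1.sublist (List.dropLast_sublist p), fun i hi => ?_⟩
  · rw [List.head?_dropLast, if_pos (by omega), hp.1]
  · rw [List.getLast?_dropLast, if_neg (by omega), List.getElem?_eq_getElem]
  · simp only [List.length_dropLast] at hi
    rw [List.getD_eq_getElem _ _ (by simp; omega), List.getD_eq_getElem _ _ (by simp; omega),
      List.getElem_dropLast, List.getElem_dropLast]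
    exact hp.edge i (by omega)

end AltPath

namespace AltPathFrom

theorem not_mem_of_M (hp : g.AltPathFrom p f u) (hodd : Odd (p.length - 1)) (h : g.M u v) :
    v ∉ p := by
  obtain ⟨hf, hp⟩ := hp
  have hodd : (p.length - 1) % 2 = 1 := Nat.odd_iff.mp hodd
  have hlast := hp.getElem_length_sub_one
  rw [List.mem_iff_getElem]
  rintro ⟨j, hj, rfl⟩
  have partner_eq_last : ∀ k (hk : k < p.length), g.M p[j] p[k] → k = p.length - 1 := by
    intro k hk hM
    have : p[k] = p[p.length - 1] := hlast ▸ g.M_matching _ _ _ hM (g.M_symm _ _ h)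
    exact hp.2.2.1.getElem_inj_iff.mp this
  rcases Nat.eq_zero_or_pos j with rfl | hj0
  · exact hf u (by simpa [hp.getElem_zero] using g.M_symm _ _ h)
  rcases Nat.even_or_odd j with heven | hoddj
  · have hM := ((hp.edge (j - 1) (by omega)).2.mpr (by have := Nat.even_iff.mp heven; omega))
    simp only [Nat.sub_add_cancel hj0] at hM
    have := partner_eq_last (j - 1) (by omega) (g.M_symm _ _ hM)
    omega
  · have hoddj := Nat.odd_iff.mp hoddj
    by_cases hjL : j = p.length - 1
    · subst hjL
      exact g.ne_of_M h (hlast ▸ rfl)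
    · have := partner_eq_last (j + 1) (by omega) ((hp.edge j (by omega)).2.mpr hoddj)
      omega

theorem concat_of_M (hp : g.AltPathFrom p f u) (hodd : Odd (p.length - 1)) (h : g.M u v) :
    g.AltPathFrom (p ++ [v]) f v ∧ Even ((p ++ [v]).length - 1) := by
  have hlen : (p ++ [v]).length - 1 = p.length - 1 + 1 := by
    have := hp.2.length_pos
    simp only [List.length_append, List.length_singleton]
    omega
  refine ⟨⟨hp.1, hp.2.concat (g.M_sub u v h) (iff_of_true h (Nat.odd_iff.mp hodd))
    (hp.not_mem_of_M hodd h)⟩, ?_⟩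
  rw [hlen]
  exact hodd.add_one

theorem dropLast_of_M (hp : g.AltPathFrom p f v) (heven : Even (p.length - 1)) (h : g.M u v) :
    g.AltPathFrom p.dropLast f u ∧ Odd (p.dropLast.length - 1) := by
  obtain ⟨hf, hp⟩ := hp
  have heven := Nat.even_iff.mp heven
  have hlast := hp.getElem_length_sub_one
  have hlen : 2 ≤ p.length := by
    by_contra hlt
    have hfv : f = v := by
      simp only [show p.length - 1 = 0 by omega, hp.getElem_zero] at hlast
      exact hlast
    exact hf u (hfv ▸ g.M_symm u v h)
  have hpen : p[p.length - 2] = u := by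
    have hM := (hp.edge (p.length - 2) (by omega)).2.mpr (by omega)
    simp only [show p.length - 2 + 1 = p.length - 1 by omega, hlast] at hM
    exact g.M_matching v _ _ (g.M_symm _ _ hM) (g.M_symm _ _ h)
  refine ⟨⟨hf, hpen ▸ hp.dropLast hlen⟩, ?_⟩
  rw [List.length_dropLast, Nat.odd_iff]
  omega

end AltPathFrom

theorem evenlevel_le (hp : g.AltPathFrom p f v) (heven : Even (p.length - 1)) :
    g.evenlevel v ≤ (p.length - 1 : ℕ) :=
  sInf_le ⟨p, f, hp, heven, rfl⟩

theorem oddlevel_le (hp : g.AltPathFrom p f v) (hodd : Odd (p.length - 1)) :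
    g.oddlevel v ≤ (p.length - 1 : ℕ) :=
  sInf_le ⟨p, f, hp, hodd, rfl⟩

theorem exists_isOddlevelPath (h : g.oddlevel v ≠ ⊤) : ∃ p f, g.IsOddlevelPath p f v := by
  rw [oddlevel, Ne, sInf_eq_top] at h
  push Not at h
  obtain ⟨n, hn, -⟩ := h
  obtain ⟨p, f, hp, hodd, hlevel⟩ := csInf_mem ⟨n, hn⟩
  exact ⟨p, f, hp, hodd, hlevel.symm⟩

theorem evenlevel_le_oddlevel_add_one (h : g.M u v) : g.evenlevel v ≤ g.oddlevel u + 1 := by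
  rcases eq_or_ne (g.oddlevel u) ⊤ with htop | htop
  · simp [htop]
  obtain ⟨p, f, hp, hodd, hlevel⟩ := g.exists_isOddlevelPath htop
  obtain ⟨hq, heven⟩ := hp.concat_of_M hodd h
  calc g.evenlevel v ≤ ((p ++ [v]).length - 1 : ℕ) := evenlevel_le hq heven
    _ = g.oddlevel u + 1 := by
      rw [← hlevel, List.length_append, List.length_singleton]
      have := hp.2.length_pos
      norm_cast
      omega

theorem oddlevel_add_one_le_evenlevel (h : g.M u v) : g.oddlevel u + 1 ≤ g.evenlevel v := by
  refine le_sInf ?_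
  rintro _ ⟨p, f, hp, heven, rfl⟩
  obtain ⟨hq, hodd⟩ := hp.dropLast_of_M heven h
  calc g.oddlevel u + 1 ≤ ((p.dropLast.length - 1 : ℕ) : ℕ∞) + 1 := by
        gcongr
        exact oddlevel_le hq hodd
    _ = (p.length - 1 : ℕ) := by
      have := Nat.odd_iff.mp hodd
      rw [List.length_dropLast] at this ⊢
      norm_cast
      omega

theorem evenlevel_eq_oddlevel_add_one (h : g.M u v) : g.evenlevel v = g.oddlevel u + 1 :=
  (evenlevel_le_oddlevel_add_one h).antisymm (oddlevel_add_one_le_evenlevel h)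

end MatchedGraph

/-- If `(u, v)` is a matched edge, then
`evenlevel(v) = oddlevel(u) + 1` and `evenlevel(u) = oddlevel(v) + 1`. -/
theorem evenlevel_eq_oddlevel_add_one_of_matched (g : MatchedGraph V) (u v : V)
    (h : g.M u v) :
    g.evenlevel v = g.oddlevel u + 1 ∧ g.evenlevel u = g.oddlevel v + 1 :=
  ⟨g.evenlevel_eq_oddlevel_add_one h, g.evenlevel_eq_oddlevel_add_one (g.M_symm u v h)⟩
end

section
/- Let p be an evenlevel(v) or oddlevel(v) path and let u lie on p. If u is not BFS-honest with respect to p, then tenacity(u) < tenacity(v). -/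
open scoped Classical

universe u

variable {V : Type u}

/-!
Write `level k v` for the least length `≡ k (mod 2)` of an alternating path from an unmatched
vertex to `v`, so that `tenacity v = level i v + level (i + 1) v`. Let `b 0, …, b l` be the
given path and `u = b i` a dishonest vertex: some path `q` reaches `u` with length `j < i`,
`j ≡ i`. Follow `q` until it first meets `b i, …, b l`, at `q c = b d`, and continue along `b`.
Continuing forwards to `b l` would beat the minimality of `l`, since `c ≤ j < i ≤ d`; so
continuing backwards to `u` is alternating, and `level (i + 1) u ≤ j + (l - i)`, whence
`tenacity u < l + i`. Cutting a path of length `l'` and parity `l + 1` to `v` in the same way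
either runs forwards, which forces `i ≤ l'`, or backwards, giving `level (i + 1) u ≤ l' + l - i`;
either way `tenacity u < l + l' = tenacity v`.
-/

namespace MatchedGraph

variable {g : MatchedGraph V}

noncomputable def level (g : MatchedGraph V) (k : ℕ) (v : V) : ℕ∞ :=
  sInf {n : ℕ∞ | ∃ p f, g.AltPathFrom p f v ∧ (p.length - 1) % 2 = k % 2 ∧
    n = ((p.length - 1 : ℕ) : ℕ∞)}

theorem evenlevel_eq_level {k : ℕ} (hk : k % 2 = 0) (v : V) :
    g.evenlevel v = g.level k v := by
  simp only [evenlevel, level, Nat.even_iff, hk]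

theorem oddlevel_eq_level {k : ℕ} (hk : k % 2 = 1) (v : V) :
    g.oddlevel v = g.level k v := by
  simp only [oddlevel, level, Nat.odd_iff, hk]

theorem tenacity_eq_level_add_level (k : ℕ) (v : V) :
    g.tenacity v = g.level k v + g.level (k + 1) v := by
  rcases Nat.mod_two_eq_zero_or_one k with hk | hk
  · rw [tenacity, evenlevel_eq_level hk, oddlevel_eq_level (k := k + 1) (by omega)]
  · rw [tenacity, evenlevel_eq_level (k := k + 1) (by omega), oddlevel_eq_level hk, add_comm]

/-- The parity offset `o` lets shifted and reversed pieces of alternating walks be glued. -/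
structure IsAltSeq (g : MatchedGraph V) (o n : ℕ) (a : ℕ → V) : Prop where
  injOn : ∀ s ≤ n, ∀ t ≤ n, a s = a t → s = t
  adj : ∀ s < n, g.adj (a s) (a (s + 1))
  matched_iff : ∀ s < n, g.M (a s) (a (s + 1)) ↔ (o + s) % 2 = 1

def splice (a τ : ℕ → V) (c : ℕ) : ℕ → V := fun s => if s ≤ c then a s else τ (s - c)

theorem splice_of_le {a τ : ℕ → V} {c s : ℕ} (hs : s ≤ c) : splice a τ c s = a s :=
  if_pos hs

theorem splice_of_ge {a τ : ℕ → V} {c s : ℕ} (hjoin : τ 0 = a c) (hs : c ≤ s) :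
    splice a τ c s = τ (s - c) := by
  rcases hs.eq_or_lt with rfl | hlt
  · rw [splice_of_le le_rfl, Nat.sub_self, hjoin]
  · exact if_neg (Nat.not_le.2 hlt)

namespace IsAltSeq

variable {o n : ℕ} {a : ℕ → V}

theorem mono (h : g.IsAltSeq o n a) {m : ℕ} (hm : m ≤ n) : g.IsAltSeq o m a where
  injOn s hs t ht := h.injOn s (hs.trans hm) t (ht.trans hm)
  adj s hs := h.adj s (hs.trans_le hm)
  matched_iff s hs := h.matched_iff s (hs.trans_le hm)

theorem drop (h : g.IsAltSeq o n a) {d : ℕ} (hd : d ≤ n) :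
    g.IsAltSeq (o + d) (n - d) (fun t => a (d + t)) where
  injOn s hs t ht hst := by
    have := h.injOn _ (by omega) _ (by omega) hst
    omega
  adj s hs := h.adj (d + s) (by omega)
  matched_iff s hs := by
    rw [Nat.add_assoc o]
    exact h.matched_iff (d + s) (by omega)

theorem reverse (h : g.IsAltSeq o n a) : g.IsAltSeq (o + n + 1) n (fun t => a (n - t)) where
  injOn s hs t ht hst := by
    have := h.injOn _ (by omega) _ (by omega) hst
    omega
  adj s hs := by
    have hadj := h.adj (n - (s + 1)) (by omega)
    rw [show n - (s + 1) + 1 = n - s by omega] at hadj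
    exact g.symm _ _ hadj
  matched_iff s hs := by
    have hM := h.matched_iff (n - (s + 1)) (by omega)
    rw [show n - (s + 1) + 1 = n - s by omega] at hM
    exact (Iff.intro (g.M_symm _ _) (g.M_symm _ _)).trans (hM.trans (by omega))

theorem splice {c k o' : ℕ} {τ : ℕ → V} (ha : g.IsAltSeq o c a) (hτ : g.IsAltSeq o' k τ)
    (hpar : o' % 2 = (o + c) % 2) (hjoin : τ 0 = a c)
    (hdisj : ∀ s < c, ∀ t ≤ k, a s ≠ τ t) : g.IsAltSeq o (c + k) (splice a τ c) := by
  have hedge : ∀ s < c + k,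
      g.adj (MatchedGraph.splice a τ c s) (MatchedGraph.splice a τ c (s + 1)) ∧
        (g.M (MatchedGraph.splice a τ c s) (MatchedGraph.splice a τ c (s + 1)) ↔
          (o + s) % 2 = 1) := by
    intro s hs
    rcases lt_or_ge s c with hsc | hsc
    · rw [splice_of_le hsc.le, splice_of_le hsc]
      exact ⟨ha.adj s hsc, ha.matched_iff s hsc⟩
    · rw [splice_of_ge hjoin hsc, splice_of_ge hjoin (by omega),
        show s + 1 - c = s - c + 1 by omega]
      exact ⟨hτ.adj _ (by omega), (hτ.matched_iff _ (by omega)).trans (by omega)⟩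
  refine ⟨fun s hs t ht hst => ?_, fun s hs => (hedge s hs).1, fun s hs => (hedge s hs).2⟩
  rcases lt_or_ge s c with hsc | hsc <;> rcases lt_or_ge t c with htc | htc
  · rw [splice_of_le hsc.le, splice_of_le htc.le] at hst
    exact ha.injOn s hsc.le t htc.le hst
  · rw [splice_of_le hsc.le, splice_of_ge hjoin htc] at hst
    exact absurd hst (hdisj s hsc _ (by omega))
  · rw [splice_of_ge hjoin hsc, splice_of_le htc.le] at hst
    exact absurd hst.symm (hdisj t htc _ (by omega))
  · rw [splice_of_ge hjoin hsc, splice_of_ge hjoin htc] at hst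
    have := hτ.injOn _ (by omega) _ (by omega) hst
    omega

end IsAltSeq

theorem level_le_of_isAltSeq {k n : ℕ} {a : ℕ → V} {v : V} (ha : g.IsAltSeq 0 n a)
    (hu : g.unmatched (a 0)) (hk : k % 2 = n % 2) (hv : a n = v) : g.level k v ≤ n := by
  set p := List.ofFn fun t : Fin (n + 1) => a t
  have hlen : p.length = n + 1 := List.length_ofFn
  have hget : ∀ s ≤ n, p.getD s (a 0) = a s := fun s hs => by
    rw [List.getD_eq_getElem _ _ (by omega), List.getElem_ofFn]
  refine sInf_le ⟨p, a 0, ⟨hu, ?_, ?_, ?_, fun s hs => ?_⟩, by simp [hlen, hk], by simp [hlen]⟩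
  · simp [p]
  · rw [List.getLast?_eq_getElem?, hlen, Nat.add_sub_cancel, ← hv, ← hget n le_rfl,
      List.getD_eq_getElem _ _ (by omega)]
    exact List.getElem?_eq_getElem _
  · exact List.nodup_ofFn.2 fun s t hst => Fin.ext (ha.injOn s (by omega) t (by omega) hst)
  · rw [hget s (by omega), hget (s + 1) (by omega)]
    exact ⟨ha.adj s (by omega), by simpa using ha.matched_iff s (by omega)⟩

namespace AltPath

variable {p : List V} {b v : V}

theorem getD_zero (h : g.AltPath p b v) : p.getD 0 b = b := by
  obtain ⟨hhead, -⟩ := h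
  cases p with
  | nil => simp at hhead
  | cons x t => simpa using hhead

theorem ne_nil (h : g.AltPath p b v) : p ≠ [] := by
  rintro rfl
  simp [AltPath] at h

theorem getD_length_sub_one (h : g.AltPath p b v) : p.getD (p.length - 1) b = v := by
  have hne := h.ne_nil
  have hlast := h.2.1
  rw [List.getLast?_eq_some_getLast hne, Option.some_inj] at hlast
  rw [List.getD_eq_getElem _ _ (List.length_pos_iff.2 hne |> Nat.sub_one_lt_of_lt), ← hlast,
    List.getLast_eq_getElem]

theorem isAltSeq (h : g.AltPath p b v) :
    g.IsAltSeq 0 (p.length - 1) (fun s => p.getD s b) where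
  injOn s hs t ht hst := by
    have hlen : 0 < p.length := List.length_pos_iff.2 h.ne_nil
    rw [List.getD_eq_getElem p b (show s < p.length by omega),
      List.getD_eq_getElem p b (show t < p.length by omega)] at hst
    exact h.2.2.1.getElem_inj_iff.1 hst
  adj s hs := (h.2.2.2 s (by omega)).1
  matched_iff s hs := by simpa using (h.2.2.2 s (by omega)).2

end AltPath

theorem exists_isAltSeq_of_level_ne_top {k : ℕ} {v : V} (h : g.level k v ≠ ⊤) :
    ∃ n a, g.IsAltSeq 0 n a ∧ g.unmatched (a 0) ∧ a n = v ∧ g.level k v = n := by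
  obtain ⟨p, f, ⟨hf, hp⟩, -, hval⟩ : g.level k v ∈ {n : ℕ∞ | ∃ p f, g.AltPathFrom p f v ∧
      (p.length - 1) % 2 = k % 2 ∧ n = ((p.length - 1 : ℕ) : ℕ∞)} :=
    csInf_mem (Set.nonempty_iff_ne_empty.2 fun he => h (by rw [level, he, sInf_empty]))
  exact ⟨_, _, hp.isAltSeq, by rwa [hp.getD_zero], hp.getD_length_sub_one, hval⟩

/-- Cut `q` at its first vertex `q c = b d` on `b e, …, b m` and continue along `b`, forwards
to `b m` or backwards to `b e`, whichever keeps the walk alternating. -/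
theorem exists_splice_of_meets {n m e s₀ t₀ : ℕ} {q b : ℕ → V}
    (hq : g.IsAltSeq 0 n q) (hq0 : g.unmatched (q 0)) (hb : g.IsAltSeq 0 m b)
    (hs₀ : s₀ ≤ n) (het₀ : e ≤ t₀) (ht₀m : t₀ ≤ m) (hmeet : q s₀ = b t₀) :
    ∃ c ≤ s₀, ∃ d, e ≤ d ∧ d ≤ m ∧
      (g.level m (b m) ≤ ↑(c + (m - d)) ∨
        c % 2 ≠ d % 2 ∧ g.level (e + 1) (b e) ≤ ↑(c + (d - e))) := by
  have hP : ∃ c d, e ≤ d ∧ d ≤ m ∧ q c = b d := ⟨s₀, t₀, het₀, ht₀m, hmeet⟩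
  obtain ⟨d, hed, hdm, hcd⟩ := Nat.find_spec hP
  have hc : Nat.find hP ≤ s₀ := Nat.find_min' hP ⟨t₀, het₀, ht₀m, hmeet⟩
  have hdisj : ∀ s < Nat.find hP, ∀ t, e ≤ t → t ≤ m → q s ≠ b t :=
    fun s hs t het htm hst => Nat.find_min hP hs ⟨t, het, htm, hst⟩
  set c := Nat.find hP
  have hqc : g.IsAltSeq 0 c q := hq.mono (hc.trans hs₀)
  have hu : ∀ τ, g.unmatched (splice q τ c 0) := fun τ => by rwa [splice_of_le (Nat.zero_le c)]
  refine ⟨c, hc, d, hed, hdm, ?_⟩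
  by_cases hpar : c % 2 = d % 2
  · have hjoin : b (d + 0) = q c := hcd.symm
    refine .inl (level_le_of_isAltSeq (hqc.splice (hb.drop hdm) (by omega) hjoin
      fun s hs t ht => hdisj s hs _ (by omega) (by omega)) (hu _) (by omega) ?_)
    rw [splice_of_ge hjoin (by omega)]
    congr 1
    omega
  · have hjoin : b (e + (d - e - 0)) = q c := by rw [hcd, Nat.sub_zero, Nat.add_sub_cancel' hed]
    refine .inr ⟨hpar, level_le_of_isAltSeq (hqc.splice ((hb.mono hdm).drop hed).reverse
      (by omega) hjoin fun s hs t ht => hdisj s hs _ (by omega) (by omega)) (hu _) (by omega) ?_⟩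
    rw [splice_of_ge hjoin (by omega)]
    congr 1
    omega

theorem tenacity_lt_of_level_ne {l i : ℕ} {b : ℕ → V} (hb : g.IsAltSeq 0 l b)
    (hb0 : g.unmatched (b 0)) (hil : i ≤ l) (hl : g.level l (b l) = l)
    (hi : g.level i (b i) ≠ i) : g.tenacity (b i) < g.tenacity (b l) := by
  have hle : g.level i (b i) ≤ i := level_le_of_isAltSeq (hb.mono hil) hb0 rfl rfl
  obtain ⟨j, q, hq, hq0, hqi, hj⟩ :=
    exists_isAltSeq_of_level_ne_top (ne_top_of_le_ne_top (ENat.natCast_ne_top i) hle)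
  have hji : j < i := by
    rw [hj] at hle hi
    exact lt_of_le_of_ne (by exact_mod_cast hle) (by exact_mod_cast hi)
  have hodd : g.level (i + 1) (b i) ≤ ↑(j + (l - i)) := by
    obtain ⟨c, hc, d, hid, hdl, hlev | ⟨-, hlev⟩⟩ :=
      exists_splice_of_meets hq hq0 hb le_rfl le_rfl hil hqi
    · rw [hl] at hlev
      have : l ≤ c + (l - d) := by exact_mod_cast hlev
      omega
    · exact hlev.trans (Nat.cast_le.2 (by omega))
  suffices h : ∃ N : ℕ, g.level (i + 1) (b i) ≤ N ∧ (j + N : ℕ∞) < l + g.level (l + 1) (b l) by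
    obtain ⟨N, hN, hlt⟩ := h
    rw [tenacity_eq_level_add_level i, tenacity_eq_level_add_level l, hj, hl]
    exact lt_of_le_of_lt (by gcongr) hlt
  rcases eq_or_ne (g.level (l + 1) (b l)) ⊤ with htop | htop
  · exact ⟨_, hodd, by rw [htop, add_top]; exact_mod_cast ENat.natCast_lt_top _⟩
  obtain ⟨l', r, hr, hr0, hrl, hl'⟩ := exists_isAltSeq_of_level_ne_top htop
  rw [hl']
  obtain ⟨c, hc, d, hid, hdl, hlev | ⟨-, hlev⟩⟩ :=
    exists_splice_of_meets hr hr0 hb le_rfl hil le_rfl hrl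
  · rw [hl] at hlev
    have : l ≤ c + (l - d) := by exact_mod_cast hlev
    exact ⟨_, hodd, by norm_cast; omega⟩
  · exact ⟨_, hlev, by norm_cast; omega⟩

end MatchedGraph

/-- On an `evenlevel(v)` or `oddlevel(v)` path `p`, if a vertex
`u` on `p` is not BFS-honest w.r.t. `p` then `tenacity(u) < tenacity(v)`. -/
theorem tenacity_lt_of_not_bfsHonest (g : MatchedGraph V) (p : List V)
    (f v : V) (hp : g.IsEvenlevelPath p f v ∨ g.IsOddlevelPath p f v)
    (i : ℕ) (hi : i < p.length) (hdis : ¬ g.BFSHonest p f i) :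
    g.tenacity (p.getD i f) < g.tenacity v := by
  obtain ⟨⟨hf, hpath⟩, hlevel⟩ :
      g.AltPathFrom p f v ∧ g.level (p.length - 1) v = ↑(p.length - 1) := by
    rcases hp with ⟨hpf, hpar, hlen⟩ | ⟨hpf, hpar, hlen⟩
    · exact ⟨hpf, (MatchedGraph.evenlevel_eq_level (Nat.even_iff.1 hpar) v).symm.trans hlen.symm⟩
    · exact ⟨hpf, (MatchedGraph.oddlevel_eq_level (Nat.odd_iff.1 hpar) v).symm.trans hlen.symm⟩
  have hdishonest : g.level i (p.getD i f) ≠ i := fun h => hdis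
    ⟨fun he => (MatchedGraph.evenlevel_eq_level (Nat.even_iff.1 he) _).trans h,
     fun ho => (MatchedGraph.oddlevel_eq_level (Nat.odd_iff.1 ho) _).trans h⟩
  have h := MatchedGraph.tenacity_lt_of_level_ne hpath.isAltSeq (by rwa [hpath.getD_zero])
    (by omega) (by rwa [hpath.getD_length_sub_one]) hdishonest
  rwa [hpath.getD_length_sub_one] at h
end

section
/- Let v be a vertex of eligible tenacity t, p a minlevel(v) path from unmatched vertex f, and b = F(p, v) the highest vertex on p with tenacity > t. Suppose u lies on p between b and v with tenacity(u) < t, and the edge (u, w) lies on p with w higher than u on p and tenacity(w) = t. Then u is BFS-honest with respect to p. -/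
open scoped Classical

universe u

variable {V : Type u}

/-!
Suppose `u = p[i]` had an alternating path `q` from an unmatched vertex, of the parity of `i`
but shorter than `i`. Let `q[α] = p[β]` be the first vertex of `q` on `p` at or after `u`.
If `α ≡ β (mod 2)`, then `q` up to `α` followed by `p` after `β` is an alternating path to `v`
shorter than `minlevel v`. Otherwise `β > i`, and `q` up to `α` followed by `p` walked back from
`β` to `w = p[i+1]` is an alternating path to `w` of parity opposite to that of the prefix of `p`
ending at `w`, so `tenacity w ≤ α + β < 2 * minlevel v ≤ tenacity v`, contradicting
`tenacity w = tenacity v`.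
-/

theorem List.exists_first_getElem {α : Type*} {q : List α} {P : α → Prop}
    (h : ∃ x ∈ q, P x) :
    ∃ a, ∃ (ha : a < q.length), P q[a] ∧ ∀ x ∈ q.take (a + 1), P x → x = q[a] := by
  have hex : ∃ a, ∃ (ha : a < q.length), P q[a] := by
    obtain ⟨x, hx, hPx⟩ := h
    obtain ⟨a, ha, rfl⟩ := List.mem_iff_getElem.1 hx
    exact ⟨a, ha, hPx⟩
  obtain ⟨ha, hPa⟩ := Nat.find_spec hex
  refine ⟨Nat.find hex, ha, hPa, fun x hx hPx => ?_⟩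
  obtain ⟨s, hs, rfl⟩ := List.mem_take_iff_getElem.1 hx
  have hsa : s = Nat.find hex := by
    have := Nat.find_min' hex ⟨_, hPx⟩
    omega
  subst hsa
  rfl

theorem List.Nodup.getElem_notMem_take {α : Type*} {l : List α} (h : l.Nodup) {n : ℕ}
    (hn : n < l.length) : l[n] ∉ l.take n := fun hmem => by
  obtain ⟨j, hj, he⟩ := List.mem_take_iff_getElem.1 hmem
  have := (h.getElem_inj_iff).1 he
  omega

theorem List.Nodup.getElem_notMem_drop {α : Type*} {l : List α} (h : l.Nodup) {n : ℕ}
    (hn : n < l.length) : l[n] ∉ l.drop (n + 1) := fun hmem => by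
  obtain ⟨j, hj, he⟩ := List.mem_drop_iff_getElem.1 hmem
  have := (h.getElem_inj_iff).1 he
  omega

theorem List.Nodup.eq_length_sub_one_of_getLast? {α : Type*} {l : List α} (h : l.Nodup) {x : α}
    (hx : l.getLast? = some x) {n : ℕ} (hn : n < l.length) (hnx : l[n] = x) :
    n = l.length - 1 := by
  rw [List.getLast?_eq_getElem?, List.getElem?_eq_getElem (by omega)] at hx
  exact (h.getElem_inj_iff).1 (hnx.trans (Option.some.inj hx).symm)

namespace MatchedGraph

variable {g : MatchedGraph V}

/-- The offset `par` describes suffixes and reversed segments of an alternating path without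
reindexing. -/
def IsAltWalk (g : MatchedGraph V) (par : ℕ) (l : List V) : Prop :=
  ∀ m, ∀ (h : m + 1 < l.length),
    g.adj l[m] l[m + 1] ∧ (g.M l[m] l[m + 1] ↔ (m + par) % 2 = 1)

namespace IsAltWalk

variable {par : ℕ} {l : List V}

theorem of_mod_two_eq {par' : ℕ} (h : g.IsAltWalk par l) (hpar : par % 2 = par' % 2) :
    g.IsAltWalk par' l :=
  fun m hm => (h m hm).imp_right fun hM => hM.trans (by omega)

theorem take (h : g.IsAltWalk par l) (n : ℕ) : g.IsAltWalk par (l.take n) := by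
  intro m hm
  simp only [List.getElem_take]
  exact h m (by simp only [List.length_take] at hm; omega)

theorem drop (h : g.IsAltWalk par l) (n : ℕ) : g.IsAltWalk (par + n) (l.drop n) := by
  intro m hm
  simp only [List.length_drop] at hm
  simp only [List.getElem_drop, ← Nat.add_assoc]
  exact (h (n + m) (by omega)).imp_right fun hM => hM.trans (by omega)

theorem reverse (h : g.IsAltWalk par l) : g.IsAltWalk (par + l.length) l.reverse := by
  intro m hm
  simp only [List.length_reverse] at hm
  simp only [List.getElem_reverse, show l.length - 1 - m = l.length - 1 - (m + 1) + 1 by omega]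
  obtain ⟨hadj, hM⟩ := h (l.length - 1 - (m + 1)) (by omega)
  exact ⟨g.symm _ _ hadj, (Iff.intro (g.M_symm _ _) (g.M_symm _ _)).trans (hM.trans (by omega))⟩

theorem append {A B : List V} {z : V} (hA : g.IsAltWalk par A) (hz : A.getLast? = some z)
    (hB : g.IsAltWalk (par + (A.length - 1)) (z :: B)) : g.IsAltWalk par (A ++ B) := by
  have hApos : 0 < A.length := List.length_pos_iff.2 (by rintro rfl; simp at hz)
  have hAz : A[A.length - 1] = z := by
    rw [List.getLast?_eq_getElem?, List.getElem?_eq_getElem (by omega)] at hz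
    exact Option.some.inj hz
  intro m hm
  simp only [List.length_append] at hm
  rcases lt_trichotomy (m + 1) A.length with hlt | heq | hgt
  · rw [List.getElem_append_left hlt, List.getElem_append_left (by omega)]
    exact hA m hlt
  · have hzB := hB 0 (by simp only [List.length_cons]; omega)
    obtain rfl : m = A.length - 1 := by omega
    rw [List.getElem_append_left (by omega), List.getElem_append_right (by omega)]
    simp only [hAz, Nat.sub_add_cancel hApos, Nat.sub_self]
    exact hzB.imp_right fun hM => hM.trans (by omega)
  · have hBm := hB (m - A.length + 1) (by simp only [List.length_cons]; omega)
    rw [List.getElem_append_right (by omega), List.getElem_append_right (by omega)]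
    simp only [List.getElem_cons_succ, show m + 1 - A.length = m - A.length + 1 by omega]
      at hBm ⊢
    exact hBm.imp_right fun hM => hM.trans (by omega)

end IsAltWalk

theorem altPath_iff_isAltWalk {p : List V} {b v : V} :
    g.AltPath p b v ↔
      p.head? = some b ∧ p.getLast? = some v ∧ p.Nodup ∧ g.IsAltWalk 0 p := by
  refine and_congr_right fun _ => and_congr_right fun _ => and_congr_right fun _ =>
    forall_congr' fun m => ?_
  refine forall_congr' fun hm => ?_
  rw [List.getD_eq_getElem _ _ hm, List.getD_eq_getElem _ _ (by omega)]
  simp only [Nat.add_zero]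

namespace AltPathFrom

variable {p A : List V} {f f' v z : V}

theorem length_pos (h : g.AltPathFrom p f v) : 0 < p.length :=
  List.length_pos_iff.2 fun hp => by simp [hp, AltPathFrom, AltPath] at h

theorem take (h : g.AltPathFrom p f v) {n : ℕ} (hn : n < p.length) :
    g.AltPathFrom (p.take (n + 1)) f p[n] := by
  obtain ⟨hf, hhead, -, hnd, hwalk⟩ := h.imp_right altPath_iff_isAltWalk.1
  refine ⟨hf, altPath_iff_isAltWalk.2
    ⟨?_, ?_, hnd.sublist (List.take_sublist _ _), hwalk.take _⟩⟩
  · simpa [List.head?_take] using hhead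
  · simp [List.getLast?_take, List.getElem?_eq_getElem hn]

theorem append {B : List V} {y : V} {par : ℕ} (hA : g.AltPathFrom A f z)
    (hB : g.IsAltWalk par (z :: B)) (hpar : par % 2 = (A.length - 1) % 2) (hBnd : B.Nodup)
    (hAB : A.Disjoint B) (hy : (z :: B).getLast? = some y) : g.AltPathFrom (A ++ B) f y := by
  obtain ⟨hf, hhead, hlast, hnd, hwalk⟩ := hA.imp_right altPath_iff_isAltWalk.1
  refine ⟨hf, altPath_iff_isAltWalk.2 ⟨?_, ?_, List.nodup_append'.2 ⟨hnd, hBnd, hAB⟩,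
    hwalk.append hlast (hB.of_mod_two_eq (by omega))⟩⟩
  · simp [List.head?_append, hhead]
  · rw [List.getLast?_cons] at hy
    cases hB' : B.getLast? <;> simp_all [List.getLast?_append]

theorem evenlevel_le (h : g.AltPathFrom p f v) (he : Even (p.length - 1)) :
    g.evenlevel v ≤ (p.length - 1 : ℕ) :=
  sInf_le ⟨p, f, h, he, rfl⟩

theorem oddlevel_le (h : g.AltPathFrom p f v) (ho : Odd (p.length - 1)) :
    g.oddlevel v ≤ (p.length - 1 : ℕ) :=
  sInf_le ⟨p, f, h, ho, rfl⟩

theorem minlevel_le (h : g.AltPathFrom p f v) : g.minlevel v ≤ (p.length - 1 : ℕ) := by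
  rcases Nat.even_or_odd (p.length - 1) with he | ho
  · exact (min_le_left _ _).trans (h.evenlevel_le he)
  · exact (min_le_right _ _).trans (h.oddlevel_le ho)

theorem tenacity_le {q : List V} (hp : g.AltPathFrom p f v) (hq : g.AltPathFrom q f' v)
    (hpar : (p.length - 1) % 2 ≠ (q.length - 1) % 2) :
    g.tenacity v ≤ (p.length - 1 + (q.length - 1) : ℕ) := by
  rw [tenacity, Nat.cast_add]
  rcases Nat.even_or_odd (p.length - 1) with he | ho
  · have ho : Odd (q.length - 1) := by
      rw [Nat.odd_iff]; rw [Nat.even_iff] at he; omega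
    exact add_le_add (hp.evenlevel_le he) (hq.oddlevel_le ho)
  · have he : Even (q.length - 1) := by
      rw [Nat.even_iff]; rw [Nat.odd_iff] at ho; omega
    rw [add_comm ((p.length - 1 : ℕ) : ℕ∞)]
    exact add_le_add (hq.evenlevel_le he) (hp.oddlevel_le ho)

theorem append_drop {b : V} {β : ℕ} (hp : g.AltPath p b v) (hβ : β < p.length)
    (hA : g.AltPathFrom A f' p[β]) (hpar : β % 2 = (A.length - 1) % 2)
    (hdisj : A.Disjoint (p.drop (β + 1))) : g.AltPathFrom (A ++ p.drop (β + 1)) f' v := by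
  obtain ⟨-, hlast, hnd, hwalk⟩ := altPath_iff_isAltWalk.1 hp
  have hcons := List.drop_eq_getElem_cons hβ
  refine hA.append (hcons ▸ hwalk.drop β) (by omega)
    (hnd.sublist (List.drop_sublist _ _)) hdisj ?_
  rw [← hcons, List.getLast?_drop, if_neg (by omega), hlast]

theorem append_reverse {b : V} {a β : ℕ} (hp : g.AltPath p b v) (ha : a ≤ β)
    (hβ : β < p.length) (hA : g.AltPathFrom A f' p[β]) (hpar : (β + 1) % 2 = (A.length - 1) % 2)
    (hdisj : A.Disjoint ((p.take β).drop a).reverse) :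
    g.AltPathFrom (A ++ ((p.take β).drop a).reverse) f' p[a] := by
  obtain ⟨-, -, hnd, hwalk⟩ := altPath_iff_isAltWalk.1 hp
  have hseg : p[β] :: ((p.take β).drop a).reverse = ((p.take (β + 1)).drop a).reverse := by
    rw [List.take_add_one, List.getElem?_eq_getElem hβ, Option.toList_some,
      List.drop_append_of_le_length (by simp only [List.length_take]; omega), List.reverse_append]
    rfl
  have hwalk' : g.IsAltWalk (β + 1) (p[β] :: ((p.take β).drop a).reverse) := by
    rw [hseg]
    refine ((hwalk.take (β + 1)).drop a).reverse.of_mod_two_eq ?_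
    simp only [List.length_drop, List.length_take]
    omega
  refine hA.append hwalk' hpar
    (List.nodup_reverse.2 (hnd.sublist ((List.drop_sublist _ _).trans (List.take_sublist _ _))))
    hdisj ?_
  rw [hseg, List.getLast?_reverse, List.head?_drop, List.getElem?_take, if_pos (by omega),
    List.getElem?_eq_getElem]

theorem minlevel_le_splice {b : V} {β : ℕ} (hp : g.AltPath p b v) (hβ : β < p.length)
    (hA : g.AltPathFrom A f' p[β]) (hpar : β % 2 = (A.length - 1) % 2)
    (hdisj : A.Disjoint (p.drop (β + 1))) :
    g.minlevel v ≤ (A.length - 1 + (p.length - 1 - β) : ℕ) := by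
  have hle := (hA.append_drop hp hβ hpar hdisj).minlevel_le
  have hApos := hA.length_pos
  rwa [List.length_append, List.length_drop, show A.length + (p.length - (β + 1)) - 1 =
    A.length - 1 + (p.length - 1 - β) by omega] at hle

theorem tenacity_succ_le_splice {i β : ℕ} (hp : g.AltPathFrom p f v) (hiβ : i < β)
    (hβ : β < p.length) (hA : g.AltPathFrom A f' p[β]) (hpar : (β + 1) % 2 = (A.length - 1) % 2)
    (hdisj : A.Disjoint ((p.take β).drop (i + 1)).reverse) :
    g.tenacity p[i + 1] ≤ (A.length - 1 + β : ℕ) := by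
  have hC := hA.append_reverse hp.2 (a := i + 1) hiβ hβ hpar hdisj
  have hApos := hA.length_pos
  have hlenC : (A ++ ((p.take β).drop (i + 1)).reverse).length - 1 =
      A.length - 1 + β - (i + 1) := by
    simp only [List.length_append, List.length_reverse, List.length_drop, List.length_take]
    omega
  have hlenW : (p.take (i + 1 + 1)).length - 1 = i + 1 := by simp only [List.length_take]; omega
  have hle := hC.tenacity_le (hp.take (by omega)) (by rw [hlenC, hlenW]; omega)
  rwa [hlenC, hlenW, show A.length - 1 + β - (i + 1) + (i + 1) = A.length - 1 + β by omega] at hle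

end AltPathFrom

theorem minlevel_add_minlevel_le_tenacity (v : V) : g.minlevel v + g.minlevel v ≤ g.tenacity v :=
  calc g.minlevel v + g.minlevel v ≤ g.minlevel v + g.maxlevel v := add_le_add le_rfl min_le_max
    _ = g.tenacity v := min_add_max _ _

theorem bfsHonest_of_forall_le {p : List V} {f v : V} {i : ℕ} (hp : g.AltPathFrom p f v)
    (hi : i < p.length)
    (h : ∀ q f', g.AltPathFrom q f' p[i] → (q.length - 1) % 2 = i % 2 → i ≤ q.length - 1) :
    g.BFSHonest p f i := by
  have hpre := hp.take hi
  have hlen : (p.take (i + 1)).length - 1 = i := by simp only [List.length_take]; omega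
  have hle_even (he : Even i) := hpre.evenlevel_le (by rwa [hlen])
  have hle_odd (ho : Odd i) := hpre.oddlevel_le (by rwa [hlen])
  rw [hlen] at hle_even hle_odd
  rw [BFSHonest, List.getD_eq_getElem _ _ hi]
  refine ⟨fun he => le_antisymm (hle_even he) (le_sInf ?_),
    fun ho => le_antisymm (hle_odd ho) (le_sInf ?_)⟩
  · rintro _ ⟨q, f', hq, hqe, rfl⟩
    rw [Nat.even_iff] at he hqe
    exact_mod_cast h q f' hq (by omega)
  · rintro _ ⟨q, f', hq, hqo, rfl⟩
    rw [Nat.odd_iff] at ho hqo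
    exact_mod_cast h q f' hq (by omega)

theorem AltPathFrom.tenacity_succ_lt_of_shortcut {p q : List V} {f f' v : V} {i : ℕ}
    (hp : g.AltPathFrom p f v) (hmin : ((p.length - 1 : ℕ) : ℕ∞) = g.minlevel v)
    (hi : i + 1 < p.length) (hq : g.AltPathFrom q f' p[i])
    (hpar : (q.length - 1) % 2 = i % 2) (hshort : q.length - 1 < i) :
    g.tenacity p[i + 1] < g.tenacity v := by
  obtain ⟨-, hqlast, hqnd, -⟩ := altPath_iff_isAltWalk.1 hq.2
  have hpnd := (altPath_iff_isAltWalk.1 hp.2).2.2.1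
  -- `q[α] = p[β]` is the first vertex of `q` on `p` at or after `u`
  obtain ⟨α, hα, hαmem, hfirst⟩ := List.exists_first_getElem (P := (· ∈ p.drop i))
    ⟨p[i], List.mem_of_getLast? hqlast, List.mem_drop_iff_getElem.2 ⟨0, by omega, rfl⟩⟩
  obtain ⟨β, hiβ, hβp, hβ⟩ : ∃ β, i ≤ β ∧ ∃ _ : β < p.length, p[β] = q[α] := by
    obtain ⟨k, hk, hβ⟩ := List.mem_drop_iff_getElem.1 hαmem
    exact ⟨i + k, by omega, by omega, hβ⟩
  have hA : g.AltPathFrom (q.take (α + 1)) f' p[β] := hβ ▸ hq.take hα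
  have hlenA : (q.take (α + 1)).length = α + 1 := by simp only [List.length_take]; omega
  have hdisj {B : List V} (hB : ∀ x ∈ B, x ∈ p.drop i) (hβB : p[β] ∉ B) :
      (q.take (α + 1)).Disjoint B :=
    List.disjoint_left.2 fun x hxA hxB => hβB (hβ ▸ hfirst x hxA (hB x hxB) ▸ hxB)
  rcases eq_or_ne (α % 2) (β % 2) with hαβ | hαβ
  · have hle := hA.minlevel_le_splice hp.2 hβp (by omega)
      (hdisj (fun x hx => (List.drop_sublist_drop_left p (by omega)).subset hx)
        (hpnd.getElem_notMem_drop hβp))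
    rw [← hmin, Nat.cast_le] at hle
    omega
  · have hβi : i < β := lt_of_le_of_ne hiβ fun hiβ' => hαβ <| by
      subst hiβ'
      have := hqnd.eq_length_sub_one_of_getLast? hqlast hα hβ.symm
      omega
    calc g.tenacity p[i + 1] ≤ ((q.take (α + 1)).length - 1 + β : ℕ) :=
          hp.tenacity_succ_le_splice hβi hβp hA (by omega)
            (hdisj (fun x hx => (((List.take_sublist β p).drop (i + 1)).trans
                (List.drop_sublist_drop_left p (by omega))).subset (List.mem_reverse.1 hx))
              fun hm => hpnd.getElem_notMem_take hβp
                ((List.drop_sublist _ _).subset (List.mem_reverse.1 hm)))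
      _ < g.minlevel v + g.minlevel v := by
          rw [← hmin, ← Nat.cast_add, Nat.cast_lt]
          omega
      _ ≤ g.tenacity v := g.minlevel_add_minlevel_le_tenacity v

end MatchedGraph

theorem bfsHonest_of_stretch_general (g : MatchedGraph V) (v f : V) (t : ℕ)
    (ht : g.tenacity v = (t : ℕ∞))
    (p : List V) (hp : g.IsMinlevelPath p f v)
    (i : ℕ) (hi : i + 1 < p.length)
    (hw : g.tenacity (p.getD (i + 1) f) = (t : ℕ∞)) :
    g.BFSHonest p f i := by
  obtain ⟨hpath, hmin⟩ := hp
  refine g.bfsHonest_of_forall_le hpath (by omega) fun q f' hq hpar => ?_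
  by_contra! hshort
  have hlt := hpath.tenacity_succ_lt_of_shortcut hmin hi hq hpar hshort
  rw [← List.getD_eq_getElem p f hi, hw, ← ht] at hlt
  exact lt_irrefl _ hlt

/-- Let `v` have eligible tenacity `t`, `p` be a `minlevel(v)` path
from an unmatched vertex `f`, and let the vertex at position `j` of `p` be the
highest vertex of tenacity `> t` on `p` (i.e. `b = F(p, v)`). If the vertex `u`
at position `i ≥ j` has `tenacity(u) < t` and the next vertex `w` on `p`
(higher than `u`) has `tenacity(w) = t`, then `u` is BFS-honest w.r.t. `p`. -/
theorem bfsHonest_of_stretch (g : MatchedGraph V) (v f : V) (t : ℕ)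
    (ht : g.tenacity v = (t : ℕ∞))
    (helig1 : g.tm ≤ (t : ℕ∞)) (helig2 : (t : ℕ∞) < g.lm)
    (p : List V) (hp : g.IsMinlevelPath p f v)
    (j : ℕ) (hj : j < p.length) (hbt : (t : ℕ∞) < g.tenacity (p.getD j f))
    (hjhigh : ∀ k, j < k → k < p.length → ¬ ((t : ℕ∞) < g.tenacity (p.getD k f)))
    (i : ℕ) (hji : j ≤ i) (hi : i + 1 < p.length)
    (hu : g.tenacity (p.getD i f) < (t : ℕ∞))
    (hw : g.tenacity (p.getD (i + 1) f) = (t : ℕ∞)) :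
    g.BFSHonest p f i :=
  bfsHonest_of_stretch_general g v f t ht p hp i hi hw
end
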